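/- (The exponential and logarithmic maps are mutually inverse, direction 2.) Let κ < 0, let x be a point of the Poincaré ball of curvature κ, and let v ≠ 0 be a vector. Then exp^κ_x(v) ≠ x and log^κ_x(exp^κ_x(v)) = v. -/

import Mathlib

/-!
Write `c = √(-κ)`, `t = c λκ(x) ‖v‖ / 2` and `w = (tanh t / (c‖v‖)) • v`, so that
`exp^κ_x(v) = x ⊕κ w` and `c‖w‖ = tanh t < 1`. Möbius addition has the left cancellation law
`(-x) ⊕κ (x ⊕κ w) = w`, a rational identity in `⟪x, w⟫`, `‖x‖²`, `‖w‖²` that holds as soon as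
the denominators involved do not vanish; for `κ ≤ 0` and `x`, `w` in the ball they are positive.
Hence `log^κ_x(exp^κ_x v)` is `w` rescaled radially by `artanh (c‖w‖) = artanh (tanh t) = t`,
which is `v`. Since `w ≠ 0` and `(-x) ⊕κ x = 0`, also `exp^κ_x(v) ≠ x`.
-/

open Real Filter

open scoped RealInnerProductSpace

/-- Inverse hyperbolic tangent. -/
noncomputable def artanh (x : ℝ) : ℝ := (1 / 2) * Real.log ((1 + x) / (1 - x))

variable {E : Type*} [NormedAddCommGroup E] [InnerProductSpace ℝ E]

/-- Möbius (gyrovector) addition on the Poincaré ball of curvature `κ`. -/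
noncomputable def mAdd (κ : ℝ) (x y : E) : E :=
  (1 - 2 * κ * ⟪x, y⟫ + κ ^ 2 * ‖x‖ ^ 2 * ‖y‖ ^ 2)⁻¹ •
    ((1 - 2 * κ * ⟪x, y⟫ - κ * ‖y‖ ^ 2) • x + (1 + κ * ‖x‖ ^ 2) • y)

/-- Conformal factor `λκ(x) = 2 / (1 + κ‖x‖²)`. -/
noncomputable def lam (κ : ℝ) (x : E) : ℝ := 2 / (1 + κ * ‖x‖ ^ 2)

open Classical in
/-- Möbius scalar multiplication `r ⊗κ x`. -/
noncomputable def mSmul (κ r : ℝ) (x : E) : E :=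
  if x = 0 then 0
  else ((1 / Real.sqrt (-κ)) * Real.tanh (r * _root_.artanh (Real.sqrt (-κ) * ‖x‖)) * ‖x‖⁻¹) • x

open Classical in
/-- Exponential map of the Poincaré ball at `x` with curvature `κ`. -/
noncomputable def expMap (κ : ℝ) (x v : E) : E :=
  if v = 0 then x
  else mAdd κ x
    ((Real.tanh (Real.sqrt (-κ) * lam κ x * ‖v‖ / 2) / (Real.sqrt (-κ) * ‖v‖)) • v)

/-- Logarithmic map of the Poincaré ball at `x` with curvature `κ`. -/
noncomputable def logMap (κ : ℝ) (x y : E) : E :=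
  ((2 / (Real.sqrt (-κ) * lam κ x)) * _root_.artanh (Real.sqrt (-κ) * ‖mAdd κ (-x) y‖) *
      ‖mAdd κ (-x) y‖⁻¹) • mAdd κ (-x) y

/-- Geodesic distance of the Poincaré ball of curvature `κ`. -/
noncomputable def dK (κ : ℝ) (x y : E) : ℝ :=
  (2 / Real.sqrt (-κ)) * _root_.artanh (Real.sqrt (-κ) * ‖mAdd κ (-x) y‖)

/-- Membership in the Poincaré ball of curvature `κ`: `κ·‖x‖² > −1`. -/
def inBall (κ : ℝ) (x : E) : Prop := κ * ‖x‖ ^ 2 > -1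

theorem artanh_eq_real_artanh {x : ℝ} (hx : x ∈ Set.Icc (-1) 1) :
    _root_.artanh x = Real.artanh x :=
  (Real.artanh_eq_half_log hx).symm

theorem artanh_tanh (t : ℝ) : _root_.artanh (tanh t) = t := by
  rw [artanh_eq_real_artanh ⟨(neg_one_lt_tanh t).le, (tanh_lt_one t).le⟩, Real.artanh_tanh]

theorem Real.tanh_pos {t : ℝ} (ht : 0 < t) : 0 < tanh t := by
  rw [tanh_eq_sinh_div_cosh]
  exact div_pos (sinh_pos_iff.2 ht) (cosh_pos t)

theorem inBall_iff_sqrt_mul_norm_lt_one {E : Type*} [NormedAddCommGroup E] {κ : ℝ} (hκ : κ < 0)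
    {x : E} :
    inBall κ x ↔ √(-κ) * ‖x‖ < 1 := by
  have hκ' : 0 ≤ -κ := by linarith
  rw [inBall, ← sq_lt_one_iff₀ (by positivity), mul_pow, sq_sqrt hκ']
  constructor <;> intro h <;> linarith

def mAddDenom (κ : ℝ) (x y : E) : ℝ := 1 - 2 * κ * ⟪x, y⟫ + κ ^ 2 * ‖x‖ ^ 2 * ‖y‖ ^ 2

section MobiusAddition

variable (κ : ℝ) (x y : E)

theorem mAdd_eq : mAdd κ x y = (mAddDenom κ x y)⁻¹ •
    ((1 - 2 * κ * ⟪x, y⟫ - κ * ‖y‖ ^ 2) • x + (1 + κ * ‖x‖ ^ 2) • y) := rfl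

theorem mAdd_neg_cancel : mAdd κ (-x) x = 0 := by
  rw [mAdd_eq, inner_neg_left, real_inner_self_eq_norm_sq, norm_neg]
  match_scalars
  ring

theorem inner_mAdd_right (z : E) : ⟪z, mAdd κ x y⟫ = (mAddDenom κ x y)⁻¹ *
    ((1 - 2 * κ * ⟪x, y⟫ - κ * ‖y‖ ^ 2) * ⟪z, x⟫ + (1 + κ * ‖x‖ ^ 2) * ⟪z, y⟫) := by
  rw [mAdd_eq, inner_smul_right, inner_add_right, inner_smul_right, inner_smul_right]

theorem norm_mAdd_sq : ‖mAdd κ x y‖ ^ 2 = (mAddDenom κ x y)⁻¹ ^ 2 *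
    ((1 - 2 * κ * ⟪x, y⟫ - κ * ‖y‖ ^ 2) ^ 2 * ‖x‖ ^ 2
      + 2 * (1 - 2 * κ * ⟪x, y⟫ - κ * ‖y‖ ^ 2) * (1 + κ * ‖x‖ ^ 2) * ⟪x, y⟫
      + (1 + κ * ‖x‖ ^ 2) ^ 2 * ‖y‖ ^ 2) := by
  rw [← real_inner_self_eq_norm_sq, mAdd_eq]
  simp only [inner_smul_left, inner_smul_right, inner_add_left, inner_add_right,
    real_inner_self_eq_norm_sq, real_inner_comm x y, conj_trivial]
  ring

variable {κ x y}

theorem mAddDenom_neg_mAdd (hD : mAddDenom κ x y ≠ 0) :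
    mAddDenom κ (-x) (mAdd κ x y) = (1 + κ * ‖x‖ ^ 2) ^ 2 / mAddDenom κ x y := by
  rw [mAddDenom, inner_neg_left, inner_mAdd_right, norm_mAdd_sq, norm_neg,
    real_inner_self_eq_norm_sq]
  field_simp
  rw [mAddDenom]
  ring

theorem mAdd_neg_cancel_left (hx : 1 + κ * ‖x‖ ^ 2 ≠ 0) (hD : mAddDenom κ x y ≠ 0) :
    mAdd κ (-x) (mAdd κ x y) = y := by
  rw [mAdd_eq κ (-x), mAddDenom_neg_mAdd hD, inner_neg_left, inner_mAdd_right, norm_mAdd_sq,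
    norm_neg, real_inner_self_eq_norm_sq, mAdd_eq]
  match_scalars
  · field_simp
    rw [mAddDenom]
    ring
  · field_simp

theorem mAddDenom_pos (hκ : κ ≤ 0) (hx : inBall κ x) (hy : inBall κ y) :
    0 < mAddDenom κ x y := by
  have hxy : -(‖x‖ * ‖y‖) ≤ ⟪x, y⟫ := neg_le_of_abs_le (abs_real_inner_le_norm x y)
  have h : 0 < 1 + κ * (‖x‖ * ‖y‖) := by
    unfold inBall at hx hy
    nlinarith [mul_nonneg (neg_nonneg.2 hκ) (sq_nonneg (‖x‖ - ‖y‖))]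
  -- mAddDenom κ x y = (1 + κ‖x‖‖y‖)² - 2κ(⟪x, y⟫ + ‖x‖‖y‖)
  unfold mAddDenom
  nlinarith [mul_nonneg (neg_nonneg.2 hκ) (by linarith : (0:ℝ) ≤ ⟪x, y⟫ + ‖x‖ * ‖y‖)]

end MobiusAddition

theorem logMap_expMap
    (κ : ℝ) (hκ : κ < 0) (x : E) (hx : inBall κ x) (v : E) (hv : v ≠ 0) :
    expMap κ x v ≠ x ∧ logMap κ x (expMap κ x v) = v := by
  set c := √(-κ) with hc_def
  have hc : 0 < c := sqrt_pos.2 (neg_pos.2 hκ)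
  have hx' : 0 < 1 + κ * ‖x‖ ^ 2 := by unfold inBall at hx; linarith
  have hlam : 0 < lam κ x := div_pos two_pos hx'
  have hv' : 0 < ‖v‖ := norm_pos_iff.2 hv
  set t := c * lam κ x * ‖v‖ / 2
  have ht : 0 < tanh t := tanh_pos (by unfold t lam; positivity)
  set w := (tanh t / (c * ‖v‖)) • v
  have hw0 : w ≠ 0 := smul_ne_zero (by positivity) hv
  have hw_norm : c * ‖w‖ = tanh t := by
    rw [norm_smul, norm_div, norm_mul, norm_of_nonneg ht.le, norm_of_nonneg hc.le, norm_norm]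
    field_simp
  have hw : inBall κ w := (inBall_iff_sqrt_mul_norm_lt_one hκ).2 (hw_norm ▸ tanh_lt_one t)
  have hcancel : mAdd κ (-x) (expMap κ x v) = w := by
    rw [expMap, if_neg hv]
    exact mAdd_neg_cancel_left hx'.ne' (mAddDenom_pos hκ.le hx hw).ne'
  refine ⟨fun h => hw0 ?_, ?_⟩
  · rwa [h, mAdd_neg_cancel, eq_comm] at hcancel
  · rw [logMap, ← hc_def, hcancel, hw_norm, _root_.artanh_tanh, smul_smul]
    convert one_smul ℝ v using 2
    have hw' : ‖w‖ = tanh t / c := by rw [← hw_norm]; field_simp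
    rw [hw']
    field_simp
    unfold t
    ring
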